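/- Let S = k[[x, y, z, w]] and I = (x, y) ∩ (z, w) = (xz, xw, yz, yw). Then for every q = p^e, e ≥ 1, (I^{[q]} :_S I) = (x^q z^q, x^q w^q, y^q z^q, y^q w^q, x^{q-1} y^{q-1} z^q, x^q z^{q-1} w^{q-1}, y^q z^{q-1} w^{q-1}, x^{q-1} y^{q-1} w^q, (xyzw)^{q-1}). -/

import Mathlib

open MvPowerSeries Finsupp

/-- The `q`-th Frobenius power `J^{[q]}` of an ideal `J`: the ideal generated by
the `q`-th powers of the elements of `J`. -/
noncomputable def frobeniusPower {R : Type*} [CommRing R] (J : Ideal R) (q : ℕ) : Ideal R :=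
  Ideal.span ((fun f => f ^ q) '' (J : Set R))

/-- In `S = k[[x,y,z,w]]` (with `x = X 0`, `y = X 1`, `z = X 2`, `w = X 3`),
the ideal `I = (x,y) ∩ (z,w) = (xz, xw, yz, yw)`. -/
noncomputable def exampleIdeal17 (K : Type*) [Field K] : Ideal (MvPowerSeries (Fin 4) K) :=
  Ideal.span {(X 0 : MvPowerSeries (Fin 4) K), X 1} ⊓ Ideal.span {(X 2 : MvPowerSeries (Fin 4) K), X 3}

section core
variable {σ : Type*} {R : Type*} [CommRing R]

theorem mem_span_monomials {n : ℕ} (E : Fin n → (σ →₀ ℕ)) (f : MvPowerSeries σ R) :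
    f ∈ Ideal.span (Set.range fun i => monomial (E i) (1 : R)) ↔
      ∀ d, coeff d f ≠ 0 → ∃ i, E i ≤ d := by
  classical
  constructor
  · intro hf
    refine Submodule.span_induction ?_ ?_ ?_ ?_ hf
    · rintro x ⟨i, rfl⟩ d hd
      exact ⟨i, le_of_eq (eq_of_coeff_monomial_ne_zero hd).symm⟩
    · intro d hd; simp at hd
    · intro a b _ _ ha hb d hd
      rw [map_add] at hd
      rcases (by by_contra h; push_neg at h; simp [h.1, h.2] at hd :
          coeff d a ≠ 0 ∨ coeff d b ≠ 0) with h | h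
      exacts [ha d h, hb d h]
    · intro r a _ ha d hd
      rw [smul_eq_mul, coeff_mul] at hd
      obtain ⟨⟨u, v⟩, huv, hne⟩ := Finset.exists_ne_zero_of_sum_ne_zero hd
      obtain ⟨i, hi⟩ := ha v (right_ne_zero_of_mul hne)
      rw [Finset.HasAntidiagonal.mem_antidiagonal] at huv
      exact ⟨i, hi.trans (huv ▸ le_add_self)⟩
  · intro h
    set sel : (σ →₀ ℕ) → Option (Fin n) := fun d =>
      if hd : ∃ i, E i ≤ d then some (Classical.choose hd) else none with hsel
    set g : Fin n → MvPowerSeries σ R := fun i c =>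
      if sel (c + E i) = some i then coeff (c + E i) f else 0 with hg
    have key : f = ∑ i : Fin n, g i * monomial (E i) 1 := by
      ext d
      rw [map_sum]
      have hterm : ∀ i : Fin n, coeff d (g i * monomial (E i) 1) =
          if E i ≤ d ∧ sel d = some i then coeff d f else 0 := by
        intro i
        rw [coeff_mul_monomial, mul_one]
        by_cases hle : E i ≤ d
        · have hdd : d - E i + E i = d := tsub_add_cancel_of_le hle
          have : coeff (d - E i) (g i) = g i (d - E i) := rfl
          rw [if_pos hle, this, hg]
          simp only [hdd]
          by_cases hs : sel d = some i
          · rw [if_pos hs, if_pos ⟨hle, hs⟩]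
          · rw [if_neg hs, if_neg (fun hc => hs hc.2)]
        · rw [if_neg hle, if_neg (fun hc => hle hc.1)]
      simp only [hterm]
      by_cases hd : ∃ i, E i ≤ d
      · have hs : sel d = some (Classical.choose hd) := by rw [hsel]; simp [hd]
        rw [Finset.sum_eq_single (Classical.choose hd)]
        · rw [if_pos ⟨Classical.choose_spec hd, hs⟩]
        · intro j _ hj
          rw [if_neg]
          rintro ⟨-, hsj⟩
          exact hj (by simpa [hs] using hsj.symm)
        · intro hmem; exact absurd (Finset.mem_univ _) hmem
      · push_neg at hd
        have : coeff d f = 0 := by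
          by_contra hc
          obtain ⟨i, hi⟩ := h d hc
          exact absurd hi (hd i)
        rw [this, Finset.sum_eq_zero]
        intro i _
        rw [if_neg (fun hc => (hd i) hc.1)]
    rw [key]
    exact Ideal.sum_mem _ fun i _ =>
      Ideal.mul_mem_left _ _ (Ideal.subset_span ⟨i, rfl⟩)

end core

section helpers
variable {σ : Type*} {R : Type*} [CommRing R]

theorem mem_colon_span_iff (M : Ideal R) (s : Set R) (f : R) :
    f ∈ Submodule.colon M (Ideal.span s) ↔ ∀ a ∈ s, f * a ∈ M := by
  rw [Submodule.mem_colon]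
  constructor
  · intro h a ha
    simpa [smul_eq_mul, mul_comm] using h a (Ideal.subset_span ha)
  · intro h p hp
    refine Submodule.span_induction ?_ ?_ ?_ ?_ hp
    · intro a ha; simpa [smul_eq_mul, mul_comm] using h a ha
    · simp
    · intro a b _ _ ha hb; rw [smul_add]; exact M.add_mem ha hb
    · intro r a _ ha
      rw [smul_comm]
      exact M.smul_mem r ha

theorem monomial_one_pow (e : σ →₀ ℕ) (q : ℕ) :
    (monomial e (1 : R)) ^ q = monomial (q • e) 1 := by
  induction q with
  | zero => simp [monomial_zero_one]
  | succ n ih =>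
    rw [pow_succ, ih, monomial_mul_monomial, one_mul, succ_nsmul]

theorem mul_monomial_mem_span_iff {n : ℕ} (E : Fin n → (σ →₀ ℕ)) (e : σ →₀ ℕ)
    (f : MvPowerSeries σ R) :
    f * monomial e 1 ∈ Ideal.span (Set.range fun i => monomial (E i) (1 : R)) ↔
      ∀ c, coeff c f ≠ 0 → ∃ i, E i ≤ c + e := by
  rw [mem_span_monomials]
  constructor
  · intro h c hc
    refine h (c + e) ?_
    rwa [coeff_add_mul_monomial, mul_one]
  · intro h d hd
    rw [coeff_mul_monomial, mul_one] at hd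
    split_ifs at hd with hle
    · obtain ⟨i, hi⟩ := h (d - e) hd
      exact ⟨i, by rwa [tsub_add_cancel_of_le hle] at hi⟩
    · exact absurd rfl hd

end helpers

theorem exists_fin_four {P : Fin 4 → Prop} : (∃ i, P i) ↔ P 0 ∨ P 1 ∨ P 2 ∨ P 3 := by
  constructor
  · rintro ⟨i, h⟩; fin_cases i <;> tauto
  · rintro (h | h | h | h) <;> exact ⟨_, h⟩

theorem forall_fin_four {P : Fin 4 → Prop} : (∀ i, P i) ↔ P 0 ∧ P 1 ∧ P 2 ∧ P 3 := by
  constructor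
  · intro h; exact ⟨h 0, h 1, h 2, h 3⟩
  · rintro ⟨h0, h1, h2, h3⟩ i; fin_cases i <;> assumption

theorem exists_fin_nine {P : Fin 9 → Prop} :
    (∃ i, P i) ↔ P 0 ∨ P 1 ∨ P 2 ∨ P 3 ∨ P 4 ∨ P 5 ∨ P 6 ∨ P 7 ∨ P 8 := by
  constructor
  · rintro ⟨i, h⟩; fin_cases i <;> tauto
  · rintro (h | h | h | h | h | h | h | h | h) <;> exact ⟨_, h⟩

/-- exponent vector -/
noncomputable def quad (a b c d : ℕ) : Fin 4 →₀ ℕ :=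
  single 0 a + single 1 b + single 2 c + single 3 d

theorem quad_le_iff (a b c d : ℕ) (u : Fin 4 →₀ ℕ) :
    quad a b c d ≤ u ↔ a ≤ u 0 ∧ b ≤ u 1 ∧ c ≤ u 2 ∧ d ≤ u 3 := by
  rw [Finsupp.le_def, forall_fin_four]
  simp [quad, Finsupp.single_apply]

theorem quad_add (a b c d a' b' c' d' : ℕ) :
    quad a b c d + quad a' b' c' d' = quad (a + a') (b + b') (c + c') (d + d') := by
  simp only [quad, Finsupp.single_add]
  abel

theorem smul_quad (q a b c d : ℕ) : q • quad a b c d = quad (q * a) (q * b) (q * c) (q * d) := by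
  simp [quad, smul_add, Finsupp.smul_single]

theorem quad_apply (a b c d : ℕ) :
    quad a b c d 0 = a ∧ quad a b c d 1 = b ∧ quad a b c d 2 = c ∧ quad a b c d 3 = d := by
  refine ⟨?_, ?_, ?_, ?_⟩ <;> simp [quad, Finsupp.single_apply]

section frob
variable {R : Type*} [CommRing R]

theorem span_image_hom (φ : R →+* R) (s : Set R) :
    Ideal.span (⇑φ '' ((Ideal.span s : Ideal R) : Set R)) = Ideal.span (⇑φ '' s) := by
  apply le_antisymm
  · rw [Ideal.span_le]
    rintro x ⟨y, hy, rfl⟩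
    refine Submodule.span_induction ?_ ?_ ?_ ?_ hy
    · intro a ha; exact Ideal.subset_span ⟨a, ha, rfl⟩
    · simpa using (Ideal.span _).zero_mem
    · intro a b _ _ ha hb; rw [map_add]; exact Ideal.add_mem _ ha hb
    · intro r a _ ha
      rw [smul_eq_mul, map_mul]
      exact Ideal.mul_mem_left _ _ ha
  · exact Ideal.span_mono (Set.image_mono Ideal.subset_span)

theorem frobeniusPower_span (p : ℕ) [Fact p.Prime] [CharP R p] (e : ℕ) (s : Set R) :
    frobeniusPower (Ideal.span s) (p ^ e) =
      Ideal.span ((fun f => f ^ p ^ e) '' s) := by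
  haveI : ExpChar R p := ExpChar.prime Fact.out
  have hfun : (fun f : R => f ^ p ^ e) = ⇑(iterateFrobenius R p e) := by
    funext x; rw [iterateFrobenius_def]
  rw [frobeniusPower, hfun, span_image_hom]

end frob

section listform
variable {σ : Type*} {R : Type*} [CommRing R]

theorem mem_span_monomials_list (L : List (σ →₀ ℕ)) (f : MvPowerSeries σ R) :
    f ∈ Ideal.span ((fun e => (monomial e (1 : R) : MvPowerSeries σ R)) '' {e | e ∈ L}) ↔
      ∀ d, coeff d f ≠ 0 → ∃ e ∈ L, e ≤ d := by
  have himg : (fun e => (monomial e (1 : R) : MvPowerSeries σ R)) '' {e | e ∈ L} =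
      Set.range (fun i : Fin L.length => monomial (L.get i) 1) := by
    ext x
    simp only [Set.mem_image, Set.mem_setOf_eq, Set.mem_range]
    constructor
    · rintro ⟨e, he, rfl⟩
      obtain ⟨i, rfl⟩ := List.mem_iff_get.mp he
      exact ⟨i, rfl⟩
    · rintro ⟨i, rfl⟩
      exact ⟨L.get i, List.mem_iff_get.mpr ⟨i, rfl⟩, rfl⟩
  rw [himg, mem_span_monomials]
  refine forall_congr' fun d => imp_congr_right fun _ => ?_
  constructor
  · rintro ⟨i, hi⟩; exact ⟨L.get i, List.mem_iff_get.mpr ⟨i, rfl⟩, hi⟩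
  · rintro ⟨e, he, hle⟩
    obtain ⟨i, rfl⟩ := List.mem_iff_get.mp he
    exact ⟨i, hle⟩

theorem mul_monomial_mem_span_list_iff (L : List (σ →₀ ℕ)) (e₀ : σ →₀ ℕ)
    (f : MvPowerSeries σ R) :
    f * monomial e₀ 1 ∈
        Ideal.span ((fun e => (monomial e (1 : R) : MvPowerSeries σ R)) '' {e | e ∈ L}) ↔
      ∀ c, coeff c f ≠ 0 → ∃ e ∈ L, e ≤ c + e₀ := by
  rw [mem_span_monomials_list]
  constructor
  · intro h c hc
    refine h (c + e₀) ?_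
    rwa [coeff_add_mul_monomial, mul_one]
  · intro h d hd
    rw [coeff_mul_monomial, mul_one] at hd
    split_ifs at hd with hle
    · obtain ⟨e, he, hle'⟩ := h (d - e₀) hd
      exact ⟨e, he, by rwa [tsub_add_cancel_of_le hle] at hle'⟩
    · exact absurd rfl hd

end listform

theorem prod_or {q x y z w : ℕ}
    (A : q ≤ x ∧ q ≤ z ∨ q ≤ x ∧ q ≤ w ∨ q ≤ y ∧ q ≤ z ∨ q ≤ y ∧ q ≤ w) :
    (q ≤ x ∨ q ≤ y) ∧ (q ≤ z ∨ q ≤ w) := by tauto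

theorem key_fwd (q a0 a1 a2 a3 : ℕ)
 (A : q ≤ a0 + 1 ∧ 0 ≤ a1 + 0 ∧ q ≤ a2 + 1 ∧ 0 ≤ a3 + 0 ∨ q ≤ a0 + 1 ∧ 0 ≤ a1 + 0 ∧ 0 ≤ a2 + 1 ∧ q ≤ a3 + 0 ∨ 0 ≤ a0 + 1 ∧ q ≤ a1 + 0 ∧ q ≤ a2 + 1 ∧ 0 ≤ a3 + 0 ∨ 0 ≤ a0 + 1 ∧ q ≤ a1 + 0 ∧ 0 ≤ a2 + 1 ∧ q ≤ a3 + 0)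
 (B : q ≤ a0 + 1 ∧ 0 ≤ a1 + 0 ∧ q ≤ a2 + 0 ∧ 0 ≤ a3 + 1 ∨ q ≤ a0 + 1 ∧ 0 ≤ a1 + 0 ∧ 0 ≤ a2 + 0 ∧ q ≤ a3 + 1 ∨ 0 ≤ a0 + 1 ∧ q ≤ a1 + 0 ∧ q ≤ a2 + 0 ∧ 0 ≤ a3 + 1 ∨ 0 ≤ a0 + 1 ∧ q ≤ a1 + 0 ∧ 0 ≤ a2 + 0 ∧ q ≤ a3 + 1)
 (C : q ≤ a0 + 0 ∧ 0 ≤ a1 + 1 ∧ q ≤ a2 + 1 ∧ 0 ≤ a3 + 0 ∨ q ≤ a0 + 0 ∧ 0 ≤ a1 + 1 ∧ 0 ≤ a2 + 1 ∧ q ≤ a3 + 0 ∨ 0 ≤ a0 + 0 ∧ q ≤ a1 + 1 ∧ q ≤ a2 + 1 ∧ 0 ≤ a3 + 0 ∨ 0 ≤ a0 + 0 ∧ q ≤ a1 + 1 ∧ 0 ≤ a2 + 1 ∧ q ≤ a3 + 0)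
 (D : q ≤ a0 + 0 ∧ 0 ≤ a1 + 1 ∧ q ≤ a2 + 0 ∧ 0 ≤ a3 + 1 ∨ q ≤ a0 + 0 ∧ 0 ≤ a1 + 1 ∧ 0 ≤ a2 + 0 ∧ q ≤ a3 + 1 ∨ 0 ≤ a0 + 0 ∧ q ≤ a1 + 1 ∧ q ≤ a2 + 0 ∧ 0 ≤ a3 + 1 ∨ 0 ≤ a0 + 0 ∧ q ≤ a1 + 1 ∧ 0 ≤ a2 + 0 ∧ q ≤ a3 + 1) :
 q ≤ a0 ∧ 0 ≤ a1 ∧ q ≤ a2 ∧ 0 ≤ a3 ∨ q ≤ a0 ∧ 0 ≤ a1 ∧ 0 ≤ a2 ∧ q ≤ a3 ∨ 0 ≤ a0 ∧ q ≤ a1 ∧ q ≤ a2 ∧ 0 ≤ a3 ∨ 0 ≤ a0 ∧ q ≤ a1 ∧ 0 ≤ a2 ∧ q ≤ a3 ∨ q - 1 ≤ a0 ∧ q - 1 ≤ a1 ∧ q ≤ a2 ∧ 0 ≤ a3 ∨ q ≤ a0 ∧ 0 ≤ a1 ∧ q - 1 ≤ a2 ∧ q - 1 ≤ a3 ∨ 0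 ≤ a0 ∧ q ≤ a1 ∧ q - 1 ≤ a2 ∧ q - 1 ≤ a3 ∨ q - 1 ≤ a0 ∧ q - 1 ≤ a1 ∧ 0 ≤ a2 ∧ q ≤ a3 ∨ q - 1 ≤ a0 ∧ q - 1 ≤ a1 ∧ q - 1 ≤ a2 ∧ q - 1 ≤ a3 := by
  simp only [Nat.zero_le, true_and, and_true, add_zero] at A B C D ⊢
  obtain ⟨u1, v1⟩ := prod_or A
  obtain ⟨-, v2⟩ := prod_or B
  obtain ⟨u2, -⟩ := prod_or C
  rcases u1 with h1 | h1 <;> rcases u2 with h2 | h2 <;>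
    rcases v1 with h3 | h3 <;> rcases v2 with h4 | h4 <;> omega

theorem key_bwd (q a0 a1 a2 a3 : ℕ)
 (A : q ≤ a0 ∧ 0 ≤ a1 ∧ q ≤ a2 ∧ 0 ≤ a3 ∨ q ≤ a0 ∧ 0 ≤ a1 ∧ 0 ≤ a2 ∧ q ≤ a3 ∨ 0 ≤ a0 ∧ q ≤ a1 ∧ q ≤ a2 ∧ 0 ≤ a3 ∨ 0 ≤ a0 ∧ q ≤ a1 ∧ 0 ≤ a2 ∧ q ≤ a3 ∨ q - 1 ≤ a0 ∧ q - 1 ≤ a1 ∧ q ≤ a2 ∧ 0 ≤ a3 ∨ q ≤ a0 ∧ 0 ≤ a1 ∧ q - 1 ≤ a2 ∧ q - 1 ≤ a3 ∨ 0 ≤ a0 ∧ q ≤ a1 ∧ q - 1 ≤ a2 ∧ q - 1 ≤ a3 ∨ q - 1 ≤ a0 ∧ q - 1 ≤ a1 ∧ 0 ≤ a2 ∧ q ≤ a3 ∨ q - 1 ≤ a0 ∧ q - 1 ≤ a1 ∧ q - 1 ≤ a2 ∧ q - 1 ≤ a3) :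
 (q ≤ a0 + 1 ∧ 0 ≤ a1 + 0 ∧ q ≤ a2 + 1 ∧ 0 ≤ a3 + 0 ∨ q ≤ a0 + 1 ∧ 0 ≤ a1 + 0 ∧ 0 ≤ a2 + 1 ∧ q ≤ a3 + 0 ∨ 0 ≤ a0 + 1 ∧ q ≤ a1 + 0 ∧ q ≤ a2 + 1 ∧ 0 ≤ a3 + 0 ∨ 0 ≤ a0 + 1 ∧ q ≤ a1 + 0 ∧ 0 ≤ a2 + 1 ∧ q ≤ a3 + 0) ∧
 (q ≤ a0 + 1 ∧ 0 ≤ a1 + 0 ∧ q ≤ a2 + 0 ∧ 0 ≤ a3 + 1 ∨ q ≤ a0 + 1 ∧ 0 ≤ a1 + 0 ∧ 0 ≤ a2 + 0 ∧ q ≤ a3 + 1 ∨ 0 ≤ a0 + 1 ∧ q ≤ a1 + 0 ∧ q ≤ a2 + 0 ∧ 0 ≤ a3 + 1 ∨ 0 ≤ a0 + 1 ∧ q ≤ a1 + 0 ∧ 0 ≤ a2 + 0 ∧ q ≤ a3 + 1) ∧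
 (q ≤ a0 + 0 ∧ 0 ≤ a1 + 1 ∧ q ≤ a2 + 1 ∧ 0 ≤ a3 + 0 ∨ q ≤ a0 + 0 ∧ 0 ≤ a1 + 1 ∧ 0 ≤ a2 + 1 ∧ q ≤ a3 + 0 ∨ 0 ≤ a0 + 0 ∧ q ≤ a1 + 1 ∧ q ≤ a2 + 1 ∧ 0 ≤ a3 + 0 ∨ 0 ≤ a0 + 0 ∧ q ≤ a1 + 1 ∧ 0 ≤ a2 + 1 ∧ q ≤ a3 + 0) ∧
 (q ≤ a0 + 0 ∧ 0 ≤ a1 + 1 ∧ q ≤ a2 + 0 ∧ 0 ≤ a3 + 1 ∨ q ≤ a0 + 0 ∧ 0 ≤ a1 + 1 ∧ 0 ≤ a2 + 0 ∧ q ≤ a3 + 1 ∨ 0 ≤ a0 + 0 ∧ q ≤ a1 + 1 ∧ q ≤ a2 + 0 ∧ 0 ≤ a3 + 1 ∨ 0 ≤ a0 + 0 ∧ q ≤ a1 + 1 ∧ 0 ≤ a2 + 0 ∧ q ≤ a3 + 1) := by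
  simp only [Nat.zero_le, true_and, and_true, add_zero] at A ⊢
  rcases A with h|h|h|h|h|h|h|h|h <;>
    refine ⟨?_, ?_, ?_, ?_⟩ <;> omega


theorem quad_app0 (a b c d : ℕ) : quad a b c d (0 : Fin 4) = a := by
  simp [quad, Finsupp.single_apply]
theorem quad_app1 (a b c d : ℕ) : quad a b c d (1 : Fin 4) = b := by
  simp [quad, Finsupp.single_apply]
theorem quad_app2 (a b c d : ℕ) : quad a b c d (2 : Fin 4) = c := by
  simp [quad, Finsupp.single_apply]
theorem quad_app3 (a b c d : ℕ) : quad a b c d (3 : Fin 4) = d := by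
  simp [quad, Finsupp.single_apply]

theorem colon_frobeniusPower_example17 {K : Type*} [Field K] (p : ℕ)
    [Fact p.Prime] [CharP K p] (e : ℕ) (he : 1 ≤ e) :
    Submodule.colon (frobeniusPower (exampleIdeal17 K) (p ^ e)) (exampleIdeal17 K) =
      Ideal.span {(X 0 : MvPowerSeries (Fin 4) K) ^ p ^ e * X 2 ^ p ^ e,
        (X 0 : MvPowerSeries (Fin 4) K) ^ p ^ e * X 3 ^ p ^ e,
        (X 1 : MvPowerSeries (Fin 4) K) ^ p ^ e * X 2 ^ p ^ e,
        (X 1 : MvPowerSeries (Fin 4) K) ^ p ^ e * X 3 ^ p ^ e,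
        (X 0 : MvPowerSeries (Fin 4) K) ^ (p ^ e - 1) * X 1 ^ (p ^ e - 1) * X 2 ^ p ^ e,
        (X 0 : MvPowerSeries (Fin 4) K) ^ p ^ e * X 2 ^ (p ^ e - 1) * X 3 ^ (p ^ e - 1),
        (X 1 : MvPowerSeries (Fin 4) K) ^ p ^ e * X 2 ^ (p ^ e - 1) * X 3 ^ (p ^ e - 1),
        (X 0 : MvPowerSeries (Fin 4) K) ^ (p ^ e - 1) * X 1 ^ (p ^ e - 1) * X 3 ^ p ^ e,
        ((X 0 : MvPowerSeries (Fin 4) K) * X 1 * X 2 * X 3) ^ (p ^ e - 1)} := by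
  classical
  haveI : CharP (MvPowerSeries (Fin 4) K) p :=
    charP_of_injective_ringHom
      (show Function.Injective (C : K →+* MvPowerSeries (Fin 4) K) from fun a b hab => by
        simpa using congrArg (constantCoeff : MvPowerSeries (Fin 4) K →+* K) hab) p
  set q : ℕ := p ^ e with hq
  have hXe : ∀ i : Fin 4, (X i : MvPowerSeries (Fin 4) K) = monomial (Finsupp.single i 1) 1 :=
    fun i => by rw [← pow_one (X i), X_pow_eq]
  -- the generating exponent lists
  set L4 : List (Fin 4 →₀ ℕ) := [quad 1 0 1 0, quad 1 0 0 1, quad 0 1 1 0, quad 0 1 0 1] with hL4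
  set LEM : List (Fin 4 →₀ ℕ) := [quad q 0 q 0, quad q 0 0 q, quad 0 q q 0, quad 0 q 0 q] with hLEM
  set L9 : List (Fin 4 →₀ ℕ) := [quad q 0 q 0, quad q 0 0 q, quad 0 q q 0, quad 0 q 0 q,
    quad (q-1) (q-1) q 0, quad q 0 (q-1) (q-1), quad 0 q (q-1) (q-1), quad (q-1) (q-1) 0 q,
    quad (q-1) (q-1) (q-1) (q-1)] with hL9
  -- step 1 : the two coordinate ideals as monomial spans
  have hIxy : Ideal.span {(X 0 : MvPowerSeries (Fin 4) K), X 1} =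
      Ideal.span ((fun e' => (monomial e' (1 : K) : MvPowerSeries (Fin 4) K)) ''
        {e' | e' ∈ [Finsupp.single (0 : Fin 4) 1, Finsupp.single (1 : Fin 4) 1]}) := by
    congr 1
    ext g
    simp [hXe, eq_comm]
  have hIzw : Ideal.span {(X 2 : MvPowerSeries (Fin 4) K), X 3} =
      Ideal.span ((fun e' => (monomial e' (1 : K) : MvPowerSeries (Fin 4) K)) ''
        {e' | e' ∈ [Finsupp.single (2 : Fin 4) 1, Finsupp.single (3 : Fin 4) 1]}) := by
    congr 1
    ext g
    simp [hXe, eq_comm]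
  -- step 2 : exampleIdeal17 as a monomial span
  have hI : exampleIdeal17 K =
      Ideal.span ((fun e' => (monomial e' (1 : K) : MvPowerSeries (Fin 4) K)) ''
        {e' | e' ∈ L4}) := by
    ext f
    rw [exampleIdeal17, Submodule.mem_inf, hIxy, hIzw, mem_span_monomials_list,
      mem_span_monomials_list, mem_span_monomials_list, hL4]
    constructor
    · rintro ⟨h1, h2⟩ d hd
      have A := h1 d hd
      have B := h2 d hd
      simp only [List.mem_cons, List.not_mem_nil, or_false, exists_eq_or_imp, exists_eq_left,
        Finsupp.single_le_iff] at A B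
      simp only [List.mem_cons, List.not_mem_nil, or_false, exists_eq_or_imp, exists_eq_left,
        quad_le_iff, quad_app0, quad_app1, quad_app2, quad_app3]
      omega
    · intro h
      refine ⟨fun d hd => ?_, fun d hd => ?_⟩ <;>
      · have A := h d hd
        simp only [List.mem_cons, List.not_mem_nil, or_false, exists_eq_or_imp, exists_eq_left,
          quad_le_iff, quad_app0, quad_app1, quad_app2, quad_app3] at A
        simp only [List.mem_cons, List.not_mem_nil, or_false, exists_eq_or_imp, exists_eq_left,
          Finsupp.single_le_iff]
        omega
  -- step 3 : the Frobenius power as a monomial span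
  have hF : frobeniusPower (exampleIdeal17 K) (p ^ e) =
      Ideal.span ((fun e' => (monomial e' (1 : K) : MvPowerSeries (Fin 4) K)) ''
        {e' | e' ∈ LEM}) := by
    rw [hI, frobeniusPower_span p e]
    congr 1
    ext x
    constructor
    · rintro ⟨y, ⟨e', he', rfl⟩, rfl⟩
      simp only [hL4, List.mem_cons, List.not_mem_nil, or_false, Set.mem_setOf_eq] at he'
      rcases he' with rfl | rfl | rfl | rfl
      · exact ⟨quad q 0 q 0, by simp [hLEM],
          by simp only [monomial_one_pow, smul_quad, ← hq]; norm_num⟩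
      · exact ⟨quad q 0 0 q, by simp [hLEM],
          by simp only [monomial_one_pow, smul_quad, ← hq]; norm_num⟩
      · exact ⟨quad 0 q q 0, by simp [hLEM],
          by simp only [monomial_one_pow, smul_quad, ← hq]; norm_num⟩
      · exact ⟨quad 0 q 0 q, by simp [hLEM],
          by simp only [monomial_one_pow, smul_quad, ← hq]; norm_num⟩
    · rintro ⟨e', he', rfl⟩
      simp only [hLEM, List.mem_cons, List.not_mem_nil, or_false, Set.mem_setOf_eq] at he'
      rcases he' with rfl | rfl | rfl | rfl
      · exact ⟨monomial (quad 1 0 1 0) 1, ⟨quad 1 0 1 0, by simp [hL4], rfl⟩,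
          by simp only [monomial_one_pow, smul_quad, ← hq]; norm_num⟩
      · exact ⟨monomial (quad 1 0 0 1) 1, ⟨quad 1 0 0 1, by simp [hL4], rfl⟩,
          by simp only [monomial_one_pow, smul_quad, ← hq]; norm_num⟩
      · exact ⟨monomial (quad 0 1 1 0) 1, ⟨quad 0 1 1 0, by simp [hL4], rfl⟩,
          by simp only [monomial_one_pow, smul_quad, ← hq]; norm_num⟩
      · exact ⟨monomial (quad 0 1 0 1) 1, ⟨quad 0 1 0 1, by simp [hL4], rfl⟩,
          by simp only [monomial_one_pow, smul_quad, ← hq]; norm_num⟩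
  -- step 4 : the right-hand side as a monomial span
  have g1 : (X 0 : MvPowerSeries (Fin 4) K) ^ q * X 2 ^ q = monomial (quad q 0 q 0) 1 := by
    simp [X_pow_eq, monomial_mul_monomial, quad]
  have g2 : (X 0 : MvPowerSeries (Fin 4) K) ^ q * X 3 ^ q = monomial (quad q 0 0 q) 1 := by
    simp [X_pow_eq, monomial_mul_monomial, quad]
  have g3 : (X 1 : MvPowerSeries (Fin 4) K) ^ q * X 2 ^ q = monomial (quad 0 q q 0) 1 := by
    simp [X_pow_eq, monomial_mul_monomial, quad]
  have g4 : (X 1 : MvPowerSeries (Fin 4) K) ^ q * X 3 ^ q = monomial (quad 0 q 0 q) 1 := by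
    simp [X_pow_eq, monomial_mul_monomial, quad]
  have g5 : (X 0 : MvPowerSeries (Fin 4) K) ^ (q-1) * X 1 ^ (q-1) * X 2 ^ q =
      monomial (quad (q-1) (q-1) q 0) 1 := by
    simp [X_pow_eq, monomial_mul_monomial, quad]
  have g6 : (X 0 : MvPowerSeries (Fin 4) K) ^ q * X 2 ^ (q-1) * X 3 ^ (q-1) =
      monomial (quad q 0 (q-1) (q-1)) 1 := by
    simp [X_pow_eq, monomial_mul_monomial, quad]
  have g7 : (X 1 : MvPowerSeries (Fin 4) K) ^ q * X 2 ^ (q-1) * X 3 ^ (q-1) =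
      monomial (quad 0 q (q-1) (q-1)) 1 := by
    simp [X_pow_eq, monomial_mul_monomial, quad]
  have g8 : (X 0 : MvPowerSeries (Fin 4) K) ^ (q-1) * X 1 ^ (q-1) * X 3 ^ q =
      monomial (quad (q-1) (q-1) 0 q) 1 := by
    simp [X_pow_eq, monomial_mul_monomial, quad]
  have g9 : ((X 0 : MvPowerSeries (Fin 4) K) * X 1 * X 2 * X 3) ^ (q-1) =
      monomial (quad (q-1) (q-1) (q-1) (q-1)) 1 := by
    simp [mul_pow, X_pow_eq, monomial_mul_monomial, quad]
  have hR : Ideal.span {(X 0 : MvPowerSeries (Fin 4) K) ^ p ^ e * X 2 ^ p ^ e,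
        (X 0 : MvPowerSeries (Fin 4) K) ^ p ^ e * X 3 ^ p ^ e,
        (X 1 : MvPowerSeries (Fin 4) K) ^ p ^ e * X 2 ^ p ^ e,
        (X 1 : MvPowerSeries (Fin 4) K) ^ p ^ e * X 3 ^ p ^ e,
        (X 0 : MvPowerSeries (Fin 4) K) ^ (p ^ e - 1) * X 1 ^ (p ^ e - 1) * X 2 ^ p ^ e,
        (X 0 : MvPowerSeries (Fin 4) K) ^ p ^ e * X 2 ^ (p ^ e - 1) * X 3 ^ (p ^ e - 1),
        (X 1 : MvPowerSeries (Fin 4) K) ^ p ^ e * X 2 ^ (p ^ e - 1) * X 3 ^ (p ^ e - 1),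
        (X 0 : MvPowerSeries (Fin 4) K) ^ (p ^ e - 1) * X 1 ^ (p ^ e - 1) * X 3 ^ p ^ e,
        ((X 0 : MvPowerSeries (Fin 4) K) * X 1 * X 2 * X 3) ^ (p ^ e - 1)} =
      Ideal.span ((fun e' => (monomial e' (1 : K) : MvPowerSeries (Fin 4) K)) ''
        {e' | e' ∈ L9}) := by
    rw [← hq, g1, g2, g3, g4, g5, g6, g7, g8, g9]
    congr 1
    ext x
    simp [hL9, eq_comm]
  -- conclusion
  ext f
  rw [hF, hI, hR, mem_colon_span_iff, Set.forall_mem_image, mem_span_monomials_list]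
  simp only [Set.mem_setOf_eq, mul_monomial_mem_span_list_iff]
  constructor
  · intro h d hd
    have A := h (show quad 1 0 1 0 ∈ L4 by simp [hL4]) d hd
    have B := h (show quad 1 0 0 1 ∈ L4 by simp [hL4]) d hd
    have C := h (show quad 0 1 1 0 ∈ L4 by simp [hL4]) d hd
    have D := h (show quad 0 1 0 1 ∈ L4 by simp [hL4]) d hd
    simp only [hLEM, List.mem_cons, List.not_mem_nil, or_false, exists_eq_or_imp, exists_eq_left,
      quad_le_iff, Finsupp.add_apply, quad_app0, quad_app1, quad_app2, quad_app3] at A B C D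
    simp only [hL9, List.mem_cons, List.not_mem_nil, or_false, exists_eq_or_imp, exists_eq_left,
      quad_le_iff, quad_app0, quad_app1, quad_app2, quad_app3]
    exact key_fwd q (d 0) (d 1) (d 2) (d 3) A B C D
  · intro h e' he' c hc
    have A := h c hc
    simp only [hL9, List.mem_cons, List.not_mem_nil, or_false, exists_eq_or_imp, exists_eq_left,
      quad_le_iff, quad_app0, quad_app1, quad_app2, quad_app3] at A
    simp only [hL4, List.mem_cons, List.not_mem_nil, or_false] at he'
    have key := key_bwd q (c 0) (c 1) (c 2) (c 3) A
    rcases he' with rfl | rfl | rfl | rfl <;>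
      simp only [hLEM, List.mem_cons, List.not_mem_nil, or_false, exists_eq_or_imp,
        exists_eq_left, quad_le_iff, Finsupp.add_apply, quad_app0, quad_app1, quad_app2,
        quad_app3]
    exacts [key.1, key.2.1, key.2.2.1, key.2.2.2]
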